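/- Let $X \in \mathbb{C}^{m\times n}$ satisfy $AX - XB = M$ where $\mathrm{rank}(M) \le \rho$, and suppose there exists a rational function $r(z) = \prod_{j=1}^k (z-\alpha_j)/\prod_{j=1}^k (z - \beta_j)$ such that $A - \beta_j I$ is invertible for all $j$, $r(B)$ is invertible, and $\|r(A)\|_2 \, \|r(B)^{-1}\|_2 \le \delta$. Then the singular values of $X$ satisfy $\sigma_{k\rho+1}(X) \le \delta\, \sigma_1(X)$, where $\sigma_1(X) \ge \sigma_2(X) \ge \cdots$ are the singular values of $X$ in decreasing order. -/

import Mathlib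

open Matrix

/-- The spectral norm (largest singular value) of a rectangular complex matrix,
defined as the operator norm of the induced map between Euclidean spaces. -/
noncomputable def specNorm {m n : ℕ} (X : Matrix (Fin m) (Fin n) ℂ) : ℝ :=
  ‖LinearMap.toContinuousLinearMap (Matrix.toEuclideanLin X)‖

/-- `svalNat X k` is the `(k+1)`-st largest singular value `σ_{k+1}(X)`, characterized
(Eckart–Young) as the distance in spectral norm from `X` to the set of matrices of
rank at most `k`. -/
noncomputable def svalNat {m n : ℕ} (X : Matrix (Fin m) (Fin n) ℂ) (k : ℕ) : ℝ :=
  sInf {r : ℝ | ∃ Y : Matrix (Fin m) (Fin n) ℂ, Y.rank ≤ k ∧ r = specNorm (X - Y)}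

section Aux

open scoped Matrix.Norms.L2Operator

lemma myspecNorm_eq {m n : ℕ} (Z : Matrix (Fin m) (Fin n) ℂ) : specNorm Z = ‖Z‖ := rfl

lemma myrank_add_le {m n : ℕ} (P Q : Matrix (Fin m) (Fin n) ℂ) :
    (P + Q).rank ≤ P.rank + Q.rank := by
  have hle : LinearMap.range (P + Q).mulVecLin ≤
      LinearMap.range P.mulVecLin ⊔ LinearMap.range Q.mulVecLin := by
    rw [Matrix.mulVecLin_add]
    intro x hx
    obtain ⟨y, rfl⟩ := hx
    exact Submodule.add_mem_sup ⟨y, rfl⟩ ⟨y, rfl⟩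
  exact (Submodule.finrank_mono hle).trans
    (Submodule.finrank_add_le_finrank_add_finrank _ _)

lemma myrank_eq_zero {m n : ℕ} (Y : Matrix (Fin m) (Fin n) ℂ) (h : Y.rank = 0) : Y = 0 := by
  have hb : LinearMap.range Y.mulVecLin = ⊥ := by
    have := h
    rwa [Matrix.rank, Submodule.finrank_eq_zero] at this
  have h0 : Y.mulVecLin = 0 := LinearMap.range_eq_bot.mp hb
  ext i j
  have h2 : Y.mulVecLin (Pi.single j 1) = 0 := by rw [h0]; rfl
  have := congrFun h2 i
  simpa [Matrix.mulVecLin_apply, Matrix.mulVec_single] using this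

lemma myrank_smul_le {m n : ℕ} (c : ℂ) (P : Matrix (Fin m) (Fin n) ℂ) :
    (c • P).rank ≤ P.rank := by
  have : c • P = (c • (1 : Matrix (Fin m) (Fin m) ℂ)) * P := by
    rw [Matrix.smul_mul, Matrix.one_mul]
  rw [this]
  exact Matrix.rank_mul_le_right _ _

lemma mycomm_inv {m : ℕ} (P Q : Matrix (Fin m) (Fin m) ℂ) (h : P * Q = Q * P)
    (hQ : IsUnit Q) : P * Q⁻¹ = Q⁻¹ * P := by
  have hd : IsUnit Q.det := (Matrix.isUnit_iff_isUnit_det Q).mp hQ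
  calc P * Q⁻¹ = Q⁻¹ * (Q * P) * Q⁻¹ := by
        rw [← Matrix.mul_assoc, Matrix.nonsing_inv_mul Q hd, Matrix.one_mul]
    _ = Q⁻¹ * (P * Q) * Q⁻¹ := by rw [h]
    _ = Q⁻¹ * P := by
        rw [Matrix.mul_assoc Q⁻¹ (P * Q) Q⁻¹, Matrix.mul_assoc P Q Q⁻¹,
          Matrix.mul_nonsing_inv Q hd, Matrix.mul_one]

lemma mycomm_shift {m : ℕ} (A : Matrix (Fin m) (Fin m) ℂ) (a b : ℂ) :
    (A - a • (1 : Matrix (Fin m) (Fin m) ℂ)) * (A - b • 1) =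
    (A - b • (1 : Matrix (Fin m) (Fin m) ℂ)) * (A - a • 1) := by
  simp only [sub_mul, mul_sub, Matrix.smul_mul, Matrix.mul_smul, Matrix.one_mul,
    Matrix.mul_one, smul_smul]
  rw [mul_comm a b]
  abel

lemma myconj {m n : ℕ} (Ca Cb : Matrix (Fin m) (Fin m) ℂ) (Da Db : Matrix (Fin n) (Fin n) ℂ)
    (X N : Matrix (Fin m) (Fin n) ℂ) (hAd : IsUnit Cb.det) (hBd : IsUnit Db.det)
    (hcomm : Ca * Cb⁻¹ = Cb⁻¹ * Ca) (h2 : Ca * X * Db - Cb * X * Da = N) :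
    Ca * Cb⁻¹ * X - X * (Da * Db⁻¹) = Cb⁻¹ * N * Db⁻¹ := by
  rw [← h2, Matrix.mul_sub, Matrix.sub_mul]
  congr 1
  · rw [hcomm, Matrix.mul_assoc Cb⁻¹ (Ca * X * Db) Db⁻¹, Matrix.mul_assoc (Ca * X) Db Db⁻¹,
      Matrix.mul_nonsing_inv Db hBd, Matrix.mul_one, Matrix.mul_assoc]
  · rw [← Matrix.mul_assoc Cb⁻¹ (Cb * X) Da, ← Matrix.mul_assoc Cb⁻¹ Cb X,
      Matrix.nonsing_inv_mul Cb hAd, Matrix.one_mul, Matrix.mul_assoc X Da Db⁻¹]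

lemma mystep {m n : ℕ} (A : Matrix (Fin m) (Fin m) ℂ) (B : Matrix (Fin n) (Fin n) ℂ)
    (X M : Matrix (Fin m) (Fin n) ℂ) (hX : A * X - X * B = M) (a b : ℂ)
    (hA : IsUnit (A - b • (1 : Matrix (Fin m) (Fin m) ℂ)))
    (hB : IsUnit (B - b • (1 : Matrix (Fin n) (Fin n) ℂ))) :
    ((A - a • 1) * (A - b • 1)⁻¹) * X - X * ((B - a • 1) * (B - b • 1)⁻¹)
      = (A - b • 1)⁻¹ * ((a - b) • M) * (B - b • 1)⁻¹ := by
  have hAd : IsUnit (A - b • (1 : Matrix (Fin m) (Fin m) ℂ)).det :=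
    (Matrix.isUnit_iff_isUnit_det _).mp hA
  have hBd : IsUnit (B - b • (1 : Matrix (Fin n) (Fin n) ℂ)).det :=
    (Matrix.isUnit_iff_isUnit_det _).mp hB
  have h2 : (A - a • 1) * X * (B - b • 1) - (A - b • 1) * X * (B - a • 1) = (a - b) • M := by
    rw [← hX]
    simp only [sub_mul, Matrix.mul_sub, Matrix.sub_mul, Matrix.smul_mul, Matrix.mul_smul,
      Matrix.one_mul, Matrix.mul_one, smul_sub, smul_smul]
    module
  exact myconj _ _ _ _ _ _ hAd hBd
    (mycomm_inv _ _ (mycomm_shift A a b) hA) h2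

/-- the `(C - a)·(C - b)⁻¹` factor. -/
noncomputable def myfac {d : ℕ} (C : Matrix (Fin d) (Fin d) ℂ) (p : ℂ × ℂ) :
    Matrix (Fin d) (Fin d) ℂ :=
  (C - p.1 • 1) * (C - p.2 • 1)⁻¹

lemma mykeyrank {m n ρ : ℕ} (A : Matrix (Fin m) (Fin m) ℂ) (B : Matrix (Fin n) (Fin n) ℂ)
    (X M : Matrix (Fin m) (Fin n) ℂ) (hX : A * X - X * B = M) (hM : M.rank ≤ ρ)
    (L : List (ℂ × ℂ))
    (hA : ∀ p ∈ L, IsUnit (A - p.2 • (1 : Matrix (Fin m) (Fin m) ℂ)))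
    (hB : ∀ p ∈ L, IsUnit (B - p.2 • (1 : Matrix (Fin n) (Fin n) ℂ))) :
    ((L.map (myfac A)).prod * X - X * (L.map (myfac B)).prod).rank ≤ L.length * ρ := by
  induction L with
  | nil => simp
  | cons p L ih =>
    simp only [List.map_cons, List.prod_cons, List.length_cons]
    set s : Matrix (Fin m) (Fin m) ℂ := myfac A p with hs
    set t : Matrix (Fin n) (Fin n) ℂ := myfac B p with ht
    set S : Matrix (Fin m) (Fin m) ℂ := (L.map (myfac A)).prod with hS
    set T : Matrix (Fin n) (Fin n) ℂ := (L.map (myfac B)).prod with hT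
    have hsplit : s * S * X - X * (t * T) = s * (S * X - X * T) + (s * X - X * t) * T := by
      rw [Matrix.mul_sub, Matrix.sub_mul, Matrix.mul_assoc, Matrix.mul_assoc,
        ← Matrix.mul_assoc X t T]
      abel
    rw [hsplit]
    have h1 : (s * (S * X - X * T)).rank ≤ L.length * ρ :=
      le_trans (Matrix.rank_mul_le_right _ _)
        (ih (fun q hq => hA q (List.mem_cons_of_mem p hq))
          (fun q hq => hB q (List.mem_cons_of_mem p hq)))
    have h2 : ((s * X - X * t)).rank ≤ ρ := by
      rw [hs, ht, myfac, myfac, mystep A B X M hX p.1 p.2 (hA p List.mem_cons_self)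
        (hB p List.mem_cons_self)]
      refine le_trans (Matrix.rank_mul_le_left _ _) ?_
      refine le_trans (Matrix.rank_mul_le_right _ _) ?_
      exact le_trans (myrank_smul_le _ _) hM
    calc (s * (S * X - X * T) + (s * X - X * t) * T).rank
        ≤ (s * (S * X - X * T)).rank + ((s * X - X * t) * T).rank := myrank_add_le _ _
      _ ≤ L.length * ρ + ρ := add_le_add h1 (le_trans (Matrix.rank_mul_le_left _ _) h2)
      _ ≤ (L.length + 1) * ρ := by ring_nf; omega

lemma myunits {n k : ℕ} (B : Matrix (Fin n) (Fin n) ℂ) (α β : Fin k → ℂ)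
    (hrBunit : IsUnit (((List.finRange k).map
      (fun j => (B - α j • (1 : Matrix (Fin n) (Fin n) ℂ)) *
        (B - β j • (1 : Matrix (Fin n) (Fin n) ℂ))⁻¹)).prod)) :
    ∀ j, IsUnit (B - β j • (1 : Matrix (Fin n) (Fin n) ℂ)) := by
  intro j
  set f : Fin k → Matrix (Fin n) (Fin n) ℂ :=
    fun j => (B - α j • (1 : Matrix (Fin n) (Fin n) ℂ)) * (B - β j • 1)⁻¹ with hf
  have hdet : (((List.finRange k).map f).prod).det ≠ 0 :=
    ((Matrix.isUnit_iff_isUnit_det _).mp hrBunit).ne_zero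
  have hmap : (((List.finRange k).map f).prod).det
      = (((List.finRange k).map f).map Matrix.det).prod :=
    (Matrix.detMonoidHom (n := Fin n) (R := ℂ)).map_list_prod _
  have hj : (f j).det ≠ 0 := by
    intro h0
    apply hdet
    rw [hmap]
    apply List.prod_eq_zero
    rw [← h0]
    exact List.mem_map_of_mem (List.mem_map_of_mem (f := f) (List.mem_finRange j))
  have h2 : ((B - β j • (1 : Matrix (Fin n) (Fin n) ℂ))⁻¹).det ≠ 0 := by
    intro h0
    apply hj
    rw [hf]
    simp only [Matrix.det_mul, h0, mul_zero]
  have : IsUnit ((B - β j • (1 : Matrix (Fin n) (Fin n) ℂ))⁻¹) :=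
    (Matrix.isUnit_iff_isUnit_det _).mpr (isUnit_iff_ne_zero.mpr h2)
  exact Matrix.isUnit_nonsing_inv_iff.mp this

lemma mysval_zero {m n : ℕ} (X : Matrix (Fin m) (Fin n) ℂ) : svalNat X 0 = specNorm X := by
  have : {r : ℝ | ∃ Y : Matrix (Fin m) (Fin n) ℂ, Y.rank ≤ 0 ∧ r = specNorm (X - Y)}
      = {specNorm X} := by
    ext r
    constructor
    · rintro ⟨Y, hY, rfl⟩
      have : Y = 0 := myrank_eq_zero Y (Nat.le_zero.mp hY)
      simp [this]
    · rintro rfl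
      exact ⟨0, by simp⟩
  rw [svalNat, this, csInf_singleton]

lemma mysval_le {m n : ℕ} (X Y : Matrix (Fin m) (Fin n) ℂ) (k : ℕ) (hY : Y.rank ≤ k) :
    svalNat X k ≤ specNorm (X - Y) := by
  apply csInf_le
  · refine ⟨0, ?_⟩
    rintro r ⟨Z, hZ, rfl⟩
    rw [myspecNorm_eq]
    exact norm_nonneg _
  · exact ⟨Y, hY, rfl⟩

end Aux

section Main

open scoped Matrix.Norms.L2Operator

theorem stmt_5 (m n ρ k : ℕ)
    (A : Matrix (Fin m) (Fin m) ℂ) (B : Matrix (Fin n) (Fin n) ℂ)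
    (X M : Matrix (Fin m) (Fin n) ℂ)
    (hX : A * X - X * B = M) (hM : M.rank ≤ ρ)
    (α β : Fin k → ℂ)
    (hβ : ∀ j, IsUnit (A - β j • (1 : Matrix (Fin m) (Fin m) ℂ)))
    (rA : Matrix (Fin m) (Fin m) ℂ)
    (hrA : rA = ((List.finRange k).map
      (fun j => (A - α j • (1 : Matrix (Fin m) (Fin m) ℂ)) *
        (A - β j • (1 : Matrix (Fin m) (Fin m) ℂ))⁻¹)).prod)
    (rB : Matrix (Fin n) (Fin n) ℂ)
    (hrB : rB = ((List.finRange k).map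
      (fun j => (B - α j • (1 : Matrix (Fin n) (Fin n) ℂ)) *
        (B - β j • (1 : Matrix (Fin n) (Fin n) ℂ))⁻¹)).prod)
    (hrBunit : IsUnit rB)
    (δ : ℝ) (hδ : specNorm rA * specNorm rB⁻¹ ≤ δ) :
    svalNat X (k * ρ) ≤ δ * svalNat X 0 := by
  have hBunit : ∀ j, IsUnit (B - β j • (1 : Matrix (Fin n) (Fin n) ℂ)) :=
    myunits B α β (hrB ▸ hrBunit)
  set L : List (ℂ × ℂ) := (List.finRange k).map (fun j => (α j, β j)) with hL
  have hLA : (L.map (myfac A)).prod = rA := by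
    rw [hrA, hL, List.map_map]; rfl
  have hLB : (L.map (myfac B)).prod = rB := by
    rw [hrB, hL, List.map_map]; rfl
  have hLlen : L.length = k := by simp [hL]
  have hrank : (rA * X - X * rB).rank ≤ k * ρ := by
    rw [← hLA, ← hLB]
    have := mykeyrank A B X M hX hM L
      (by rintro p hp
          obtain ⟨j, -, rfl⟩ := List.mem_map.mp hp
          exact hβ j)
      (by rintro p hp
          obtain ⟨j, -, rfl⟩ := List.mem_map.mp hp
          exact hBunit j)
    rwa [hLlen] at this
  have hrBd : IsUnit rB.det := (Matrix.isUnit_iff_isUnit_det _).mp hrBunit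
  set Y : Matrix (Fin m) (Fin n) ℂ := X - rA * X * rB⁻¹ with hY
  have hYeq : Y = (X * rB - rA * X) * rB⁻¹ := by
    rw [hY, Matrix.sub_mul, Matrix.mul_assoc X rB rB⁻¹, Matrix.mul_nonsing_inv rB hrBd, Matrix.mul_one]
  have hYr : Y.rank ≤ k * ρ := by
    rw [hYeq]
    refine le_trans (Matrix.rank_mul_le_left _ _) ?_
    rw [← neg_sub, ← neg_one_smul ℂ]
    exact le_trans (myrank_smul_le _ _) hrank
  have h1 : svalNat X (k * ρ) ≤ specNorm (X - Y) := mysval_le X Y (k * ρ) hYr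
  have hXY : X - Y = rA * X * rB⁻¹ := by rw [hY, sub_sub_cancel]
  have hnorm : specNorm (X - Y) ≤ δ * specNorm X := by
    rw [hXY, myspecNorm_eq, myspecNorm_eq]
    have hδ' : ‖rA‖ * ‖rB⁻¹‖ ≤ δ := by
      rw [myspecNorm_eq, myspecNorm_eq] at hδ; exact hδ
    calc ‖rA * X * rB⁻¹‖ ≤ ‖rA * X‖ * ‖rB⁻¹‖ := Matrix.l2_opNorm_mul _ _
      _ ≤ ‖rA‖ * ‖X‖ * ‖rB⁻¹‖ :=
          mul_le_mul_of_nonneg_right (Matrix.l2_opNorm_mul _ _) (norm_nonneg _)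
      _ = ‖rA‖ * ‖rB⁻¹‖ * ‖X‖ := by ring
      _ ≤ δ * ‖X‖ := mul_le_mul_of_nonneg_right hδ' (norm_nonneg _)
  rw [mysval_zero]
  exact h1.trans hnorm

end Main
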